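/- arXiv:2111.12789 — 2 statements merged into one kernel-verified Lean document; each statement's English description precedes it below -/
import Mathlib

section
/- Let W : [a,b] → Matrix (Fin 2) (Fin 2) ℝ satisfy W(a) = 0, W'(a) = 1, W'' = R·W with R continuous, and suppose det W(λ) ≠ 0 for λ ∈ (a, a+ε]. Define θ(λ) := trace(W'(λ) * (W(λ))⁻¹). Then (λ - a)·θ(λ) → 2 as λ → a⁺. -/
theorem stmt_12 (a b ε : ℝ) (hab : a < b) (hε : 0 < ε) (hεb : a + ε ≤ b)
    (W W' R : ℝ → Matrix (Fin 2) (Fin 2) ℝ)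
    (hR : ∀ i j, ContinuousOn (fun x => R x i j) (Set.Icc a b))
    (hW1 : ∀ x ∈ Set.Icc a b, ∀ i j, HasDerivAt (fun t => W t i j) (W' x i j) x)
    (hW2 : ∀ x ∈ Set.Icc a b, ∀ i j, HasDerivAt (fun t => W' t i j) ((R x * W x) i j) x)
    (hWa : W a = 0) (hW'a : W' a = 1)
    (hdet : ∀ x ∈ Set.Ioc a (a + ε), (W x).det ≠ 0) :
    Filter.Tendsto (fun x => (x - a) * (W' x * (W x)⁻¹).trace)
      (nhdsWithin a (Set.Ioi a)) (nhds 2) := by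
  have ha : a ∈ Set.Icc a b := ⟨le_refl a, hab.le⟩
  have hV : ∀ i j, Filter.Tendsto (fun x => (x - a)⁻¹ * W x i j)
      (nhdsWithin a (Set.Ioi a)) (nhds ((1 : Matrix (Fin 2) (Fin 2) ℝ) i j)) := by
    intro i j
    have h := hW1 a ha i j
    rw [hasDerivAt_iff_tendsto_slope] at h
    have h2 := h.mono_left (nhdsWithin_mono a (fun x hx => ne_of_gt hx))
    rw [hW'a] at h2
    refine h2.congr (fun x => ?_)
    simp [slope_def_field, hWa, div_eq_inv_mul]
  have hW'c : ∀ i j, Filter.Tendsto (fun x => W' x i j)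
      (nhdsWithin a (Set.Ioi a)) (nhds ((1 : Matrix (Fin 2) (Fin 2) ℝ) i j)) := by
    intro i j
    have h := ((hW2 a ha i j).continuousAt).tendsto.mono_left (nhdsWithin_le_nhds (s := Set.Ioi a))
    rwa [hW'a] at h
  have hnum : Filter.Tendsto (fun x =>
      W' x 0 0 * ((x - a)⁻¹ * W x 1 1) - W' x 0 1 * ((x - a)⁻¹ * W x 1 0)
        - W' x 1 0 * ((x - a)⁻¹ * W x 0 1) + W' x 1 1 * ((x - a)⁻¹ * W x 0 0))
      (nhdsWithin a (Set.Ioi a)) (nhds 2) := by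
    have h := ((((hW'c 0 0).mul (hV 1 1)).sub ((hW'c 0 1).mul (hV 1 0))).sub
      ((hW'c 1 0).mul (hV 0 1))).add ((hW'c 1 1).mul (hV 0 0))
    convert h using 2
    norm_num [Matrix.one_apply]
  have hden : Filter.Tendsto (fun x =>
      ((x - a)⁻¹ * W x 0 0) * ((x - a)⁻¹ * W x 1 1)
        - ((x - a)⁻¹ * W x 0 1) * ((x - a)⁻¹ * W x 1 0))
      (nhdsWithin a (Set.Ioi a)) (nhds 1) := by
    have h := ((hV 0 0).mul (hV 1 1)).sub ((hV 0 1).mul (hV 1 0))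
    convert h using 2
    norm_num [Matrix.one_apply]
  have htend := hnum.div hden (by norm_num)
  rw [div_one] at htend
  refine htend.congr' ?_
  filter_upwards [Ioo_mem_nhdsGT_of_mem ⟨le_refl a, lt_add_of_pos_right a hε⟩] with x hx
  have hs : x - a ≠ 0 := sub_ne_zero.mpr (ne_of_gt hx.1)
  have hd := hdet x ⟨hx.1, hx.2.le⟩
  rw [Matrix.det_fin_two] at hd
  rw [Matrix.inv_def]
  simp only [Ring.inverse_eq_inv', Matrix.mul_smul, Matrix.trace_smul, smul_eq_mul,
    Matrix.adjugate_fin_two, Matrix.trace_fin_two, Matrix.mul_apply, Fin.sum_univ_two,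
    Matrix.det_fin_two, Matrix.cons_val', Matrix.cons_val_zero, Matrix.cons_val_one,
    Matrix.head_cons, Matrix.head_fin_const, Matrix.empty_val', Matrix.cons_val_fin_one,
    Pi.div_apply, Matrix.of_apply]
  field_simp
  ring
end

section
/- Let θ : [a,b] → ℝ be differentiable with θ(c) < 0 for some c ∈ [a,b) and θ'(λ) ≤ -θ(λ)²/2 on [c,b]. Then θ(λ) ≤ θ(c)/(1 + (θ(c)/2)(λ - c)) for λ ∈ [c, b] as long as the right-hand side is defined; in particular θ(λ) → -∞ no later than λ = c + 2/|θ(c)|, so if b ≥ c + 2/|θ(c)| the bundle must reach a singular point (caustic) in [c, b]. -/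
theorem stmt_19 (c b : ℝ) (hcb : c < b) (θ θ' : ℝ → ℝ)
    (hθc : θ c < 0)
    (hderiv : ∀ x ∈ Set.Icc c b, HasDerivAt θ (θ' x) x)
    (hineq : ∀ x ∈ Set.Icc c b, θ' x ≤ -(θ x) ^ 2 / 2) :
    (∀ x ∈ Set.Icc c b, 0 < 1 + (θ c / 2) * (x - c) →
      θ x ≤ θ c / (1 + (θ c / 2) * (x - c))) ∧
    (c + 2 / |θ c| ≤ b → False) := by
  have hcont : ContinuousOn θ (Set.Icc c b) := fun x hx =>
    ((hderiv x hx).continuousAt).continuousWithinAt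
  -- θ is antitone on [c,b]
  have hanti : AntitoneOn θ (Set.Icc c b) := by
    refine antitoneOn_of_hasDerivWithinAt_nonpos (convex_Icc c b) hcont
      (f' := θ') (fun x hx => ?_) (fun x hx => ?_) <;> rw [interior_Icc] at hx <;>
      have hx' : x ∈ Set.Icc c b := Set.Ioo_subset_Icc_self hx
    · exact (hderiv x hx').hasDerivWithinAt
    · have := hineq x hx'
      nlinarith [sq_nonneg (θ x)]
  have hcmem : c ∈ Set.Icc c b := Set.left_mem_Icc.2 hcb.le
  have hθneg : ∀ x ∈ Set.Icc c b, θ x < 0 := fun x hx =>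
    lt_of_le_of_lt (hanti hcmem hx hx.1) hθc
  -- key inequality for u = θ⁻¹
  have key : ∀ x ∈ Set.Icc c b, (θ c)⁻¹ + (x - c) / 2 ≤ (θ x)⁻¹ := by
    have hmono : MonotoneOn (fun x => (θ x)⁻¹ - x / 2) (Set.Icc c b) := by
      refine monotoneOn_of_hasDerivWithinAt_nonneg (convex_Icc c b)
        ((hcont.inv₀ (fun x hx => (hθneg x hx).ne)).sub
          ((continuous_id.div_const 2).continuousOn))
        (f' := fun x => -θ' x / θ x ^ 2 - 1 / 2)
        (fun x hx => ?_) (fun x hx => ?_) <;> rw [interior_Icc] at hx <;>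
        have hx' : x ∈ Set.Icc c b := Set.Ioo_subset_Icc_self hx <;>
        have hθx := hθneg x hx'
      · exact (((hderiv x hx').inv hθx.ne).sub
          ((hasDerivAt_id x).div_const 2)).hasDerivWithinAt
      · have h1 := hineq x hx'
        have h2 : (0:ℝ) < θ x ^ 2 := by nlinarith
        rw [sub_nonneg, le_div_iff₀ h2]
        nlinarith
    intro x hx
    have := hmono hcmem hx hx.1
    simp only at this
    linarith
  constructor
  · intro x hx hD
    have hθx := hθneg x hx
    have hk := key x hx
    have hvu : (1 + θ c / 2 * (x - c)) / θ c ≤ (θ x)⁻¹ := by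
      have hcne : θ c ≠ 0 := hθc.ne
      have : (1 + θ c / 2 * (x - c)) / θ c = (θ c)⁻¹ + (x - c) / 2 := by
        field_simp
      rw [this]; exact hk
    have huneg : (θ x)⁻¹ < 0 := inv_neg''.2 hθx
    have hvneg : (1 + θ c / 2 * (x - c)) / θ c < 0 := div_neg_of_pos_of_neg hD hθc
    -- invert: for v ≤ u < 0, u⁻¹ ≤ v⁻¹
    have hinv : ((θ x)⁻¹)⁻¹ ≤ ((1 + θ c / 2 * (x - c)) / θ c)⁻¹ := by
      have h1 : (0:ℝ) < -(θ x)⁻¹ := by linarith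
      have h2 : -(θ x)⁻¹ ≤ -((1 + θ c / 2 * (x - c)) / θ c) := by linarith
      have := inv_anti₀ h1 h2
      simp only [inv_neg] at this
      linarith
    rw [inv_inv, inv_div] at hinv
    exact hinv
  · intro hb
    have habs : |θ c| = -θ c := abs_of_neg hθc
    have hpos : 0 < 2 / |θ c| := by
      apply div_pos two_pos
      rw [habs]; linarith
    have hx₀mem : c + 2 / |θ c| ∈ Set.Icc c b :=
      ⟨le_add_of_nonneg_right hpos.le, hb⟩
    have hk := key _ hx₀mem
    have hθx₀ : (θ (c + 2 / |θ c|))⁻¹ < 0 := inv_neg''.2 (hθneg _ hx₀mem)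
    have hcne : θ c ≠ 0 := hθc.ne
    have hz : (θ c)⁻¹ + (c + 2 / |θ c| - c) / 2 = 0 := by
      rw [habs]
      field_simp
      ring
    linarith
end
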